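/- For any letter a ∈ A, any α ∈ A^{ℕ₊}, any x ∈ D_α and any n ∈ ℕ, the number of occurrences of a in the word x|_{[0,2^n)} differs from Σ_{j ≤ n, α_j = a} 2^{n-j} by at most 1. -/

import Mathlib

/-- The level `n` of a candidate 1-net: the arithmetic progression `2^n ℤ + k n`. -/
def netLevel (k : ℕ+ → ℤ) (n : ℕ+) : Set ℤ :=
  {i : ℤ | ∃ t : ℤ, i = 2 ^ (n : ℕ) * t + k n}

/-- A 1-net: the levels `2^n ℤ + k n`, for `n ≥ 1`, are pairwise disjoint. -/
def IsOneNet (k : ℕ+ → ℤ) : Prop :=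
  Pairwise fun m n : ℕ+ => Disjoint (netLevel k m) (netLevel k n)

/-- `D_α`: the Toeplitz configurations which are constantly `α n` on level
`2^n ℤ + k n` of some 1-net. -/
def Dconf {A : Type*} (α : ℕ+ → A) : Set (ℤ → A) :=
  {x | ∃ k : ℕ+ → ℤ, IsOneNet k ∧ ∀ n : ℕ+, ∀ i ∈ netLevel k n, x i = α n}

/-! Inside the window `[0, 2^n)`, level `j ≤ n` of the net is a residue class modulo `2^j`, so it
has exactly `2^(n-j)` points, all carrying the letter `α j`. These `n` disjoint levels cover
`2^n - 1` of the `2^n` points of the window, so the sum counts the occurrences of `a` exactly,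
except possibly at the one uncovered point. -/

open Finset

section Colouring

variable {ι α β : Type*} [DecidableEq α] [DecidableEq β]

theorem card_filter_biUnion_of_forall_eq {s : Finset ι} {S : ι → Finset α}
    (hS : (s : Set ι).PairwiseDisjoint S) {x : α → β} {c : ι → β}
    (hx : ∀ j ∈ s, ∀ i ∈ S j, x i = c j) (b : β) :
    #{i ∈ s.biUnion S | x i = b} = ∑ j ∈ s with c j = b, #(S j) := by
  rw [filter_biUnion, card_biUnion fun j hj j' hj' hne => disjoint_filter_filter (hS hj hj' hne),
    sum_filter]
  refine sum_congr rfl fun j hj => ?_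
  split_ifs with hc
  · rw [filter_true_of_mem fun i hi => (hx j hj i hi).trans hc]
  · rw [filter_false_of_mem fun i hi h => hc ((hx j hj i hi).symm.trans h), card_empty]

theorem abs_card_filter_sub_sum_le {I : Finset α} {s : Finset ι} {S : ι → Finset α}
    (hSI : ∀ j ∈ s, S j ⊆ I) (hS : (s : Set ι).PairwiseDisjoint S) {x : α → β} {c : ι → β}
    (hx : ∀ j ∈ s, ∀ i ∈ S j, x i = c j) (b : β) :
    |(#{i ∈ I | x i = b} : ℤ) - ∑ j ∈ s with c j = b, (#(S j) : ℤ)| ≤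
      #I - ∑ j ∈ s, (#(S j) : ℤ) := by
  set U := s.biUnion S
  have hUI : U ⊆ I := biUnion_subset.mpr hSI
  have hsplit : #{i ∈ I | x i = b} = #{i ∈ U | x i = b} + #{i ∈ I \ U | x i = b} := by
    rw [← card_union_of_disjoint (disjoint_filter_filter disjoint_sdiff), ← filter_union,
      union_sdiff_of_subset hUI]
  have hrest : #{i ∈ I \ U | x i = b} ≤ #I - #U :=
    (card_filter_le _ _).trans (card_sdiff_of_subset hUI).le
  have hU : #U = ∑ j ∈ s, #(S j) := card_biUnion hS
  have hUle : #U ≤ #I := card_le_card hUI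
  rw [hsplit, card_filter_biUnion_of_forall_eq hS hx b, ← Nat.cast_sum, ← Nat.cast_sum, ← hU,
    abs_le]
  push_cast
  omega

end Colouring

theorem Int.card_Ico_filter_modEq_add_mul {r : ℤ} (hr : 0 < r) (a v : ℤ) {q : ℤ} (hq : 0 ≤ q) :
    (#{x ∈ Ico a (a + r * q) | x ≡ v [ZMOD r]} : ℤ) = q := by
  have hshift : ((a + r * q - v : ℤ) : ℚ) / r = ((a - v : ℤ) : ℚ) / r + q := by
    field_simp
    push_cast
    ring
  rw [Int.Ico_filter_modEq_card _ _ hr, ← Int.cast_sub, ← Int.cast_sub, hshift,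
    Int.ceil_add_intCast, add_sub_cancel_left, max_eq_left hq]

theorem sum_range_two_pow_sub_succ (n : ℕ) :
    ∑ j ∈ range n, (2 : ℤ) ^ (n - (j + 1)) = 2 ^ n - 1 := by
  have hgeom := geom_sum_mul (2 : ℤ) n
  norm_num at hgeom
  calc ∑ j ∈ range n, (2 : ℤ) ^ (n - (j + 1))
      = ∑ j ∈ range n, (2 : ℤ) ^ (n - 1 - j) :=
        sum_congr rfl fun j _ => by rw [Nat.sub_sub, add_comm]
    _ = 2 ^ n - 1 := by rw [sum_range_reflect (fun j => (2 : ℤ) ^ j) n, hgeom]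

theorem mem_netLevel_iff {k : ℕ+ → ℤ} {m : ℕ+} {i : ℤ} :
    i ∈ netLevel k m ↔ i ≡ k m [ZMOD 2 ^ (m : ℕ)] := by
  rw [Int.modEq_comm, Int.modEq_iff_dvd]
  exact ⟨fun ⟨t, ht⟩ => ⟨t, by omega⟩, fun ⟨t, ht⟩ => ⟨t, by omega⟩⟩

instance (k : ℕ+ → ℤ) (m : ℕ+) : DecidablePred (· ∈ netLevel k m) :=
  fun _ => decidable_of_iff _ mem_netLevel_iff.symm

theorem card_Ico_filter_mem_netLevel (k : ℕ+ → ℤ) {m : ℕ+} {n : ℕ} (h : (m : ℕ) ≤ n) :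
    (#{i ∈ Ico 0 (2 ^ n) | i ∈ netLevel k m} : ℤ) = 2 ^ (n - m) := by
  have hwindow : (2 : ℤ) ^ n = 0 + 2 ^ (m : ℕ) * 2 ^ (n - m) := by
    rw [zero_add, ← pow_add, Nat.add_sub_cancel' h]
  simp_rw [mem_netLevel_iff]
  rw [hwindow, Int.card_Ico_filter_modEq_add_mul (by positivity) _ _ (by positivity)]

theorem IsOneNet.pairwiseDisjoint_filter {k : ℕ+ → ℤ} (hk : IsOneNet k) (I : Finset ℤ) :
    Pairwise fun m m' => Disjoint {i ∈ I | i ∈ netLevel k m} {i ∈ I | i ∈ netLevel k m'} :=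
  fun _ _ hne => disjoint_left.mpr fun _ hi hi' =>
    Set.disjoint_left.mp (hk hne) (mem_filter.mp hi).2 (mem_filter.mp hi').2

/-- The number of occurrences of `a` in `x|_{[0,2^n)}`, for `x ∈ D_α`, differs from
`Σ_{1 ≤ j ≤ n, α_j = a} 2^(n-j)` by at most `1`. -/
theorem occurrences_close_to_sum {A : Type*} [DecidableEq A] (α : ℕ+ → A)
    (x : ℤ → A) (hx : x ∈ Dconf α) (a : A) (n : ℕ) :
    |((((Finset.Ico (0 : ℤ) (2 ^ n)).filter fun i => x i = a).card : ℤ) -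
        ∑ j ∈ Finset.range n,
          if α ⟨j + 1, Nat.succ_pos j⟩ = a then (2 : ℤ) ^ (n - (j + 1)) else 0)| ≤ 1 := by
  obtain ⟨k, hk, hxk⟩ := hx
  set S : ℕ → Finset ℤ := fun j => {i ∈ Ico 0 (2 ^ n) | i ∈ netLevel k j.succPNat}
  have hcard : ∀ j ∈ range n, (#(S j) : ℤ) = 2 ^ (n - (j + 1)) := fun j hj =>
    card_Ico_filter_mem_netLevel k (Nat.succ_le_of_lt (mem_range.mp hj))
  have hS : ((range n : Finset ℕ) : Set ℕ).PairwiseDisjoint S := fun j _ j' _ hne =>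
    hk.pairwiseDisjoint_filter _ (Nat.succPNat_inj.not.mpr hne)
  have hwindow : (#(Ico (0 : ℤ) (2 ^ n)) : ℤ) = 2 ^ n := by
    rw [Int.card_Ico, sub_zero, Int.toNat_of_nonneg (by positivity)]
  have key := abs_card_filter_sub_sum_le (I := Ico 0 (2 ^ n)) (fun j _ => filter_subset _ _) hS
    (fun j _ i hi => hxk j.succPNat i (mem_filter.mp hi).2) (c := fun j => α j.succPNat) a
  rwa [sum_filter, sum_congr rfl fun j hj => by rw [hcard j hj], sum_congr rfl hcard,
    sum_range_two_pow_sub_succ, hwindow, sub_sub_cancel] at key
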